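/- arXiv:2510.16749 — 4 statements merged into one kernel-verified Lean document; each statement's English description precedes it below -/
import Mathlib

section
/- Let k, K be positive integers with K = c·k + d where 0 ≤ d < k (Euclidean division). Consider the map ψ : [k·K] → [k·K] defined as follows: write x = a·K + b with 0 ≤ b < K, and b = e·k + f with 0 ≤ f < k; set ψ(x) = (a·c + e)·k + f if e < c, and ψ(x) = c·k·k + a·d + f if e = c (here a ranges in [k]). Then ψ is a bijection of [k·K]. -/
/-!
With `x = a·K + b`, the map sends the head `b < c·k` of the `a`-th block of length `K` to
`a·(c·k) + b` and its tail `b = c·k + f` to `c·k² + a·d + f`: it lists the `k` heads of length `c·k`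
one after another, followed by the `k` tails of length `d`. On each of the two pieces the image is a
mixed-radix numeral in the digits `(a, b)`, so the map is injective, and an injective self-map of a
finite set is a bijection.
-/

/-- The block-rearrangement map on `[k·K]`, where `K = c·k + d`, `0 ≤ d < k`:
write `x = a·K + b`, `b = e·k + f`; send `x` to `(a·c + e)·k + f` if `e < c`,
and to `c·k² + a·d + f` if `e = c`. -/
def blockPsi (k c d : ℕ) (x : ℕ) : ℕ :=
  let K := c * k + d
  let a := x / K
  let b := x % K
  let e := b / k
  let f := b % k
  if e < c then (a * c + e) * k + f else c * k * k + a * d + f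

theorem Nat.mul_add_eq_mul_add_iff {m a b a' b' : ℕ} (hb : b < m) (hb' : b' < m) :
    a * m + b = a' * m + b' ↔ a = a' ∧ b = b' := by
  refine ⟨fun h => ?_, fun ⟨rfl, rfl⟩ => rfl⟩
  have hm : 0 < m := by omega
  have h₁ := (Nat.div_mod_unique hm).2 ⟨(by ring : b + m * a = a * m + b), hb⟩
  have h₂ := (Nat.div_mod_unique hm).2 ⟨(by ring : b' + m * a' = a' * m + b'), hb'⟩
  rw [h] at h₁
  exact ⟨h₁.1.symm.trans h₂.1, h₁.2.symm.trans h₂.2⟩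

theorem Nat.mul_add_lt_mul_of_lt {a k b m : ℕ} (ha : a < k) (hb : b < m) : a * m + b < k * m :=
  calc a * m + b < (a + 1) * m := by rw [Nat.succ_mul]; omega
    _ ≤ k * m := Nat.mul_le_mul_right m ha

def blockSplit (k m d x : ℕ) : ℕ :=
  if x % (m + d) < m then x / (m + d) * m + x % (m + d)
  else k * m + x / (m + d) * d + (x % (m + d) - m)

section blockSplit

variable {k m d x : ℕ}

theorem blockSplit_of_lt (h : x % (m + d) < m) :
    blockSplit k m d x = x / (m + d) * m + x % (m + d) :=
  if_pos h

theorem blockSplit_of_le (h : m ≤ x % (m + d)) :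
    blockSplit k m d x = k * m + x / (m + d) * d + (x % (m + d) - m) :=
  if_neg h.not_gt

theorem blockSplit_lt_mul_of_lt (hx : x < k * (m + d)) (h : x % (m + d) < m) :
    blockSplit k m d x < k * m := by
  rw [blockSplit_of_lt h]
  exact Nat.mul_add_lt_mul_of_lt (Nat.div_lt_of_lt_mul (mul_comm k _ ▸ hx)) h

theorem mul_le_blockSplit_of_le (h : m ≤ x % (m + d)) : k * m ≤ blockSplit k m d x := by
  rw [blockSplit_of_le h, add_assoc]
  exact Nat.le_add_right _ _

theorem blockSplit_lt (hx : x < k * (m + d)) : blockSplit k m d x < k * (m + d) := by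
  rcases lt_or_ge (x % (m + d)) m with h | h
  · exact (blockSplit_lt_mul_of_lt hx h).trans_le (Nat.mul_le_mul_left k (Nat.le_add_right m d))
  · have hmod : x % (m + d) - m < d := by
      have := Nat.mod_lt x (Nat.pos_of_mul_pos_left (x.zero_le.trans_lt hx))
      omega
    have ha : x / (m + d) < k := Nat.div_lt_of_lt_mul (mul_comm k _ ▸ hx)
    rw [blockSplit_of_le h, mul_add, add_assoc]
    exact Nat.add_lt_add_left (Nat.mul_add_lt_mul_of_lt ha hmod) _

end blockSplit

theorem blockSplit_injOn (k m d : ℕ) : Set.InjOn (blockSplit k m d) (Set.Iio (k * (m + d))) := by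
  intro x hx y hy h
  have hpos : 0 < m + d := Nat.pos_of_mul_pos_left ((Nat.zero_le x).trans_lt hx)
  have hxn := Nat.mod_lt x hpos
  have hyn := Nat.mod_lt y hpos
  suffices x / (m + d) = y / (m + d) ∧ x % (m + d) = y % (m + d) from Nat.ext_div_mod this.1 this.2
  rcases lt_or_ge (x % (m + d)) m with hxm | hxm <;>
    rcases lt_or_ge (y % (m + d)) m with hym | hym
  · rw [blockSplit_of_lt hxm, blockSplit_of_lt hym] at h
    exact (Nat.mul_add_eq_mul_add_iff hxm hym).1 h
  · exact absurd h ((blockSplit_lt_mul_of_lt hx hxm).trans_le (mul_le_blockSplit_of_le hym)).ne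
  · exact absurd h ((blockSplit_lt_mul_of_lt hy hym).trans_le (mul_le_blockSplit_of_le hxm)).ne'
  · rw [blockSplit_of_le hxm, blockSplit_of_le hym, add_assoc, add_assoc] at h
    have := (Nat.mul_add_eq_mul_add_iff (by omega) (by omega)).1 (Nat.add_left_cancel h)
    omega

theorem blockSplit_bijOn (k m d : ℕ) :
    Set.BijOn (blockSplit k m d) (Set.Iio (k * (m + d))) (Set.Iio (k * (m + d))) :=
  (Set.finite_Iio _).injOn_iff_bijOn_of_mapsTo (fun _ => blockSplit_lt) |>.1
    (blockSplit_injOn k m d)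

theorem blockPsi_eq_blockSplit {k c d : ℕ} (hd : d ≤ k) (hK : 0 < c * k + d) (x : ℕ) :
    blockPsi k c d x = blockSplit k (c * k) d x := by
  have hk : 0 < k := Nat.pos_of_ne_zero (by rintro rfl; omega)
  have hb := Nat.mod_lt x hK
  have hbk := Nat.div_add_mod' (x % (c * k + d)) k
  simp only [blockPsi, blockSplit]
  set b := x % (c * k + d)
  by_cases hbc : b < c * k
  · rw [if_pos ((Nat.div_lt_iff_lt_mul hk).2 hbc), if_pos hbc]
    linear_combination hbk
  · have he : b / k = c := by
      refine le_antisymm (Nat.lt_succ_iff.1 ((Nat.div_lt_iff_lt_mul hk).2 ?_)) ?_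
      · rw [Nat.succ_mul]; omega
      · exact (Nat.le_div_iff_mul_le hk).2 (by omega)
    rw [he] at hbk
    rw [if_neg (by omega), if_neg hbc, mul_comm k]
    omega

theorem stmt_4_general (k K c d : ℕ) (hK : 0 < K)
    (hKeq : K = c * k + d) (hd : d < k) :
    Set.BijOn (blockPsi k c d) (Set.Iio (k * K)) (Set.Iio (k * K)) := by
  subst hKeq
  exact (blockSplit_bijOn k (c * k) d).congr fun x _ => (blockPsi_eq_blockSplit hd.le hK x).symm

/-- The block-rearrangement map is a bijection of `[k·K]`. -/
theorem stmt_4 (k K c d : ℕ) (hk : 0 < k) (hK : 0 < K)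
    (hKeq : K = c * k + d) (hd : d < k) :
    Set.BijOn (blockPsi k c d) (Set.Iio (k * K)) (Set.Iio (k * K)) :=
  stmt_4_general k K c d hK hKeq hd
end

section
/- Let ψ : [kK] → [kK] be the block-rearrangement bijection with K = ck + d, 0 ≤ d < k, and let λ_ψ(x) = ψ((x+1) mod kK) − ψ(x) be its generating cocycle. Then the set E of x ∈ [kK] for which |λ_ψ(x)| > 1 has cardinality at most 2k. -/
open Finset

theorem Nat.add_one_div_mod_of_mod_add_one_lt {x n : ℕ} (h : x % n + 1 < n) :
    (x + 1) / n = x / n ∧ (x + 1) % n = x % n + 1 := by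
  have hmod : (x + 1) % n = x % n + 1 := by rw [← Nat.mod_add_mod, Nat.mod_eq_of_lt h]
  refine ⟨Nat.succ_div_of_not_dvd fun hdvd => ?_, hmod⟩
  rw [Nat.dvd_iff_mod_eq_zero, hmod] at hdvd
  omega

theorem Nat.add_one_div_mod_of_mod_add_one_eq {x n : ℕ} (h : x % n + 1 = n) :
    (x + 1) / n = x / n + 1 ∧ (x + 1) % n = 0 := by
  have hmod : (x + 1) % n = 0 := by rw [← Nat.mod_add_mod, h, Nat.mod_self]
  exact ⟨Nat.succ_div_of_dvd (Nat.dvd_of_mod_eq_zero hmod), hmod⟩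

theorem card_filter_mod_eq_le (k n v : ℕ) : #{x ∈ range (k * n) | x % n = v} ≤ k := by
  calc #{x ∈ range (k * n) | x % n = v}
      ≤ #(range k) := by
        refine card_le_card_of_injOn (· / n) (fun x hx => ?_) (fun x hx y hy hxy => ?_)
        · simp only [coe_filter, mem_range, Set.mem_ofPred_eq, coe_range, Set.mem_Iio] at hx ⊢
          exact Nat.div_lt_of_lt_mul (mul_comm k n ▸ hx.1)
        · simp only [coe_filter, mem_range, Set.mem_ofPred_eq] at hx hy
          exact Nat.ext_div_mod hxy (hx.2.trans hy.2.symm)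
    _ = k := card_range k

theorem blockPsi_add_one {k c d x : ℕ} (hd : d < k) (hlt : x % (c * k + d) + 1 < c * k + d)
    (hne : x % (c * k + d) + 1 ≠ c * k) :
    blockPsi k c d (x + 1) = blockPsi k c d x + 1 := by
  obtain ⟨hdiv, hmod⟩ := Nat.add_one_div_mod_of_mod_add_one_lt hlt
  simp only [blockPsi, hdiv, hmod]
  set b := x % (c * k + d)
  have hfk : b % k < k := Nat.mod_lt _ (by omega)
  rcases Nat.lt_or_ge (b % k + 1) k with hf | hf
  · obtain ⟨hdiv', hmod'⟩ := Nat.add_one_div_mod_of_mod_add_one_lt hf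
    rw [hdiv', hmod']
    split_ifs <;> omega
  · obtain ⟨hdiv', hmod'⟩ := Nat.add_one_div_mod_of_mod_add_one_eq (by omega : b % k + 1 = k)
    have hb : b + 1 = k * (b / k + 1) := by have := Nat.div_add_mod b k; rw [mul_add_one]; omega
    have hec : b / k + 1 < c := by
      have hle : b / k + 1 < c + 1 :=
        Nat.lt_of_mul_lt_mul_left (a := k) (by rw [← hb, mul_add_one, mul_comm]; omega)
      have hne' : b / k + 1 ≠ c := fun h => hne (by rw [hb, h, mul_comm])
      omega
    rw [hdiv', hmod', if_pos hec, if_pos (by omega), add_mul, add_mul, add_mul]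
    omega

theorem mod_eq_of_one_lt_natAbs_blockPsi_sub {k c d x : ℕ} (hd : d < k) (hK : 0 < c * k + d)
    (hx : x < k * (c * k + d))
    (h : 1 < ((blockPsi k c d ((x + 1) % (k * (c * k + d))) : ℤ) - blockPsi k c d x).natAbs) :
    x % (c * k + d) = c * k - 1 ∨ x % (c * k + d) = c * k + d - 1 := by
  by_contra! hmod
  have hlt : x % (c * k + d) + 1 < c * k + d := by have := Nat.mod_lt x hK; omega
  have hx' : x + 1 < k * (c * k + d) := by
    refine lt_of_le_of_ne hx fun heq => ?_
    have := (Nat.add_one_div_mod_of_mod_add_one_lt hlt).2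
    rw [heq, Nat.mul_mod_left] at this
    omega
  rw [Nat.mod_eq_of_lt hx', blockPsi_add_one hd hlt (by omega)] at h
  simp at h

theorem stmt_8_general (k K c d : ℕ) (hK : 0 < K)
    (hKeq : K = c * k + d) (hd : d < k) :
    ((Finset.range (k * K)).filter (fun x =>
        1 < ((blockPsi k c d ((x + 1) % (k * K)) : ℤ)
              - (blockPsi k c d x : ℤ)).natAbs)).card ≤ 2 * k := by
  subst hKeq
  calc _ ≤ #{x ∈ range (k * (c * k + d)) |
          x % (c * k + d) = c * k - 1 ∨ x % (c * k + d) = c * k + d - 1} := by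
        refine card_le_card fun x => ?_
        simp only [mem_filter, mem_range]
        exact fun ⟨hx, h⟩ => ⟨hx, mod_eq_of_one_lt_natAbs_blockPsi_sub hd hK hx h⟩
    _ ≤ k + k := by
        rw [filter_or]
        exact (card_union_le _ _).trans
          (add_le_add (card_filter_mod_eq_le ..) (card_filter_mod_eq_le ..))
    _ = 2 * k := (two_mul k).symm

/-- The set of points where the generating cocycle of the block-rearrangement
bijection has absolute value greater than `1` has cardinality at most `2k`. -/
theorem stmt_8 (k K c d : ℕ) (hk : 0 < k) (hK : 0 < K)
    (hKeq : K = c * k + d) (hd : d < k) :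
    ((Finset.range (k * K)).filter (fun x =>
        1 < ((blockPsi k c d ((x + 1) % (k * K)) : ℤ)
              - (blockPsi k c d x : ℤ)).natAbs)).card ≤ 2 * k :=
  stmt_8_general k K c d hK hKeq hd
end

section
/- Let ω : ℕ → ℝ≥0 be non-decreasing and sublinear, i.e., ω(n)/n → 0 as n → ∞. Then for every δ > 0, there exists a strictly increasing sequence of positive integers (k_n)_{n≥0} with k_0 = 1 and k_n | k_{n+2} for all n, such that Σ_{n≥0} (k_{n−1} k_n / k_{n+1})·ω(k_n) < δ and Σ_{n≥1} (2/k_n)·ω(k_{n−1} k_n) < δ (with the convention k_{−1} = 1). -/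
/-!
Choose the `k_n` greedily, reserving the budget `δ / 2 / 2 / 2 ^ n` for the `n`-th terms of both
series (these budgets sum to `δ / 2`). Given `k_{n-1}` and `k_n`, take `k_{n+1}` a large multiple
of `k_{n-1}`: the first term `k_{n-1} k_n ω(k_n) / k_{n+1}` is a constant over `k_{n+1}`, and the
second term `2 ω(k_n k_{n+1}) / k_{n+1}` is `2 k_n` times `ω(m) / m` at `m = k_n k_{n+1}`, so by
sublinearity both tend to `0` as `k_{n+1} → ∞`.
-/

open scoped NNReal Topology
open Filter

lemma tendsto_comp_mul_div_of_tendsto_div {ω : ℕ → ℝ≥0}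
    (hω : Tendsto (fun n => ω n / n) atTop (𝓝 0)) {m : ℕ} (hm : 0 < m) :
    Tendsto (fun c => ω (m * c) / c) atTop (𝓝 0) := by
  have hm' : (m : ℝ≥0) ≠ 0 := by exact_mod_cast hm.ne'
  simpa [Function.comp_def, ← mul_div_assoc, mul_div_mul_left _ _ hm'] using
    (hω.comp (tendsto_id.const_mul_atTop' hm)).const_mul (m : ℝ≥0)

lemma exists_multiple_gt_with_small_errors {ω : ℕ → ℝ≥0}
    (hω : Tendsto (fun n => ω n / n) atTop (𝓝 0)) {a b : ℕ} (ha : 0 < a) (hb : 0 < b)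
    {ε : ℝ≥0} (hε : 0 < ε) :
    ∃ c : ℕ, a ∣ c ∧ b < c ∧ (a * b / c : ℝ≥0) * ω b ≤ ε ∧ (2 / c : ℝ≥0) * ω (b * c) ≤ ε := by
  have h₁ : Tendsto (fun c : ℕ => (a * b / c : ℝ≥0) * ω b) atTop (𝓝 0) := by
    simpa only [div_mul_eq_mul_div] using tendsto_const_div_atTop_nhds_zero_nat _
  have h₂ : Tendsto (fun c : ℕ => (2 / c : ℝ≥0) * ω (b * c)) atTop (𝓝 0) := by
    simpa only [div_mul_eq_mul_div, mul_div_assoc, mul_zero] using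
      (tendsto_comp_mul_div_of_tendsto_div hω hb).const_mul 2
  obtain ⟨c, ⟨hc₁, hc₂⟩, hbc⟩ := (tendsto_id.const_mul_atTop' ha).eventually
    (((h₁.eventually (ge_mem_nhds hε)).and (h₂.eventually (ge_mem_nhds hε))).and
      (eventually_gt_atTop b)) |>.exists
  exact ⟨a * c, dvd_mul_right a c, hbc, hc₁, hc₂⟩

lemma summable_and_tsum_lt_of_le_geometric {f : ℕ → ℝ≥0} {δ : ℝ≥0} (hδ : 0 < δ)
    (hf : ∀ n, f n ≤ δ / 2 / 2 / 2 ^ n) : Summable f ∧ ∑' n, f n < δ := by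
  have hg : HasSum (fun n : ℕ => δ / 2 / 2 / 2 ^ n) (δ / 2) :=
    NNReal.hasSum_coe.1 (by push_cast; exact hasSum_geometric_two' _)
  have hs := NNReal.summable_of_le hf hg.summable
  refine ⟨hs, ?_⟩
  calc ∑' n, f n ≤ δ / 2 := hg.tsum_eq ▸ hs.tsum_le_tsum hf hg.summable
    _ < δ := NNReal.half_lt_self hδ.ne'

def secondOrderSeq (F : ℕ → ℕ → ℕ → ℕ) : ℕ → ℕ
  | 0 => 1
  | 1 => F 0 1 1
  | n + 2 => F (n + 1) (secondOrderSeq F n) (secondOrderSeq F (n + 1))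

namespace secondOrderSeq

variable {F : ℕ → ℕ → ℕ → ℕ}

lemma succ (n : ℕ) :
    secondOrderSeq F (n + 1) =
      F n (if n = 0 then 1 else secondOrderSeq F (n - 1)) (secondOrderSeq F n) := by
  cases n <;> rfl

lemma pos_and_strictMono (hF : ∀ n a b, 0 < a → 0 < b → b < F n a b) :
    (∀ n, 0 < secondOrderSeq F n) ∧ StrictMono (secondOrderSeq F) := by
  have h : ∀ n, 0 < secondOrderSeq F n ∧ secondOrderSeq F n < secondOrderSeq F (n + 1) := by
    intro n
    induction n with
    | zero => exact ⟨one_pos, hF 0 1 1 one_pos one_pos⟩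
    | succ m ih => exact ⟨ih.1.trans ih.2, hF _ _ _ ih.1 (ih.1.trans ih.2)⟩
  exact ⟨fun n => (h n).1, strictMono_nat_of_lt_succ fun n => (h n).2⟩

end secondOrderSeq

theorem stmt_10_general (ω : ℕ → ℝ≥0)
    (hsub : Filter.Tendsto (fun n => (ω n : ℝ) / n) Filter.atTop (nhds 0))
    (δ : ℝ≥0) (hδ : 0 < δ) :
    ∃ k : ℕ → ℕ, k 0 = 1 ∧ StrictMono k ∧ (∀ n, 0 < k n)
      ∧ (∀ n, k n ∣ k (n + 2))
      ∧ (Summable (fun n =>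
          (((if n = 0 then 1 else k (n - 1)) : ℝ≥0) * k n / k (n + 1)) * ω (k n)))
      ∧ (∑' n : ℕ,
          (((if n = 0 then 1 else k (n - 1)) : ℝ≥0) * k n / k (n + 1)) * ω (k n)) < δ
      ∧ (Summable (fun n : ℕ => (2 / (k (n + 1) : ℝ≥0)) * ω (k n * k (n + 1))))
      ∧ (∑' n : ℕ, (2 / (k (n + 1) : ℝ≥0)) * ω (k n * k (n + 1))) < δ := by
  have hω : Tendsto (fun n => ω n / n) atTop (𝓝 0) :=
    NNReal.tendsto_coe.1 (by simpa only [NNReal.coe_div, NNReal.coe_natCast, NNReal.coe_zero] using hsub)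
  have hstep : ∀ n a b, 0 < a → 0 < b → ∃ c : ℕ, a ∣ c ∧ b < c ∧
      (a * b / c : ℝ≥0) * ω b ≤ δ / 2 / 2 / 2 ^ n ∧ (2 / c : ℝ≥0) * ω (b * c) ≤ δ / 2 / 2 / 2 ^ n :=
    fun n a b ha hb => exists_multiple_gt_with_small_errors hω ha hb (by positivity)
  choose! F hdvd hlt herr₁ herr₂ using hstep
  obtain ⟨hpos, hmono⟩ := secondOrderSeq.pos_and_strictMono hlt
  have hprev : ∀ n, 0 < if n = 0 then 1 else secondOrderSeq F (n - 1) := fun n => by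
    split_ifs
    exacts [one_pos, hpos _]
  refine ⟨secondOrderSeq F, rfl, hmono, hpos, fun n => hdvd _ _ _ (hpos n) (hpos (n + 1)), ?_⟩
  rw [← and_assoc]
  refine ⟨summable_and_tsum_lt_of_le_geometric hδ fun n => ?_,
    summable_and_tsum_lt_of_le_geometric hδ fun n => ?_⟩ <;> rw [secondOrderSeq.succ n]
  · exact_mod_cast herr₁ n _ _ (hprev n) (hpos n)
  · exact herr₂ n _ _ (hprev n) (hpos n)

/-- For every non-decreasing sublinear `ω` and `δ > 0`, there is a strictly
increasing sequence `(k_n)` of positive integers with `k 0 = 1`, `k n ∣ k (n+2)`,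
making the two error series smaller than `δ` (with the convention `k_{-1} = 1`). -/
theorem stmt_10 (ω : ℕ → ℝ≥0) (hω : Monotone ω)
    (hsub : Filter.Tendsto (fun n => (ω n : ℝ) / n) Filter.atTop (nhds 0))
    (δ : ℝ≥0) (hδ : 0 < δ) :
    ∃ k : ℕ → ℕ, k 0 = 1 ∧ StrictMono k ∧ (∀ n, 0 < k n)
      ∧ (∀ n, k n ∣ k (n + 2))
      ∧ (Summable (fun n =>
          (((if n = 0 then 1 else k (n - 1)) : ℝ≥0) * k n / k (n + 1)) * ω (k n)))
      ∧ (∑' n : ℕ,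
          (((if n = 0 then 1 else k (n - 1)) : ℝ≥0) * k n / k (n + 1)) * ω (k n)) < δ
      ∧ (Summable (fun n : ℕ => (2 / (k (n + 1) : ℝ≥0)) * ω (k n * k (n + 1))))
      ∧ (∑' n : ℕ, (2 / (k (n + 1) : ℝ≥0)) * ω (k n * k (n + 1))) < δ :=
  stmt_10_general ω hsub δ hδ
end

section
/- Given two divisibility-increasing sequences (a_n) (with a_n | a_{n+1}) and (b_n) (with b_n | b_{n+1}) of positive integers, both tending to infinity, and any function F : ℕ × ℕ → ℕ, there exists a strictly increasing sequence (k_n)_{n≥1} of positive integers such that: k_n | k_{n+2} for all n; k_{n+1} > F(k_{n-1}, k_n) for all n (with k_0 = 1); the odd subsequence (k_{2n+1}) has the same supernatural number as (a_n); and the even subsequence (k_{2n}) has the same supernatural number as (b_n). -/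
/-!
Pick the terms one at a time, alternately from `(a_n)` and `(b_n)`, each at an index larger than
every index used before and large enough that the term beats the required growth bound; this is
possible because both sequences tend to infinity. Increasing indices make each parity class a
divisibility chain, and since the `n`-th index is at least `n`, each parity class and the sequence
it samples divide into each other cofinally, so they have the same supernatural number.
-/

open scoped ENat

open Filter

theorem Nat.iSup_factorization_le_of_forall_exists_dvd {c d : ℕ → ℕ} (hd : ∀ n, d n ≠ 0)
    (h : ∀ m, ∃ n, c m ∣ d n) (q : ℕ) :
    ⨆ m, ((c m).factorization q : ℕ∞) ≤ ⨆ n, ((d n).factorization q : ℕ∞) := by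
  refine iSup_le fun m => ?_
  obtain ⟨n, hdvd⟩ := h m
  have hle : (c m).factorization q ≤ (d n).factorization q :=
    (Nat.factorization_le_iff_dvd (ne_zero_of_dvd_ne_zero (hd n) hdvd) (hd n)).mpr hdvd q
  exact (le_iSup _ n).trans' (by exact_mod_cast hle)

theorem Nat.iSup_factorization_eq_of_cofinal {c d : ℕ → ℕ} (hc : ∀ n, c n ≠ 0)
    (hd : ∀ n, d n ≠ 0) (hcd : ∀ m, ∃ n, c m ∣ d n) (hdc : ∀ n, ∃ m, d n ∣ c m) (q : ℕ) :
    ⨆ m, ((c m).factorization q : ℕ∞) = ⨆ n, ((d n).factorization q : ℕ∞) :=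
  le_antisymm (iSup_factorization_le_of_forall_exists_dvd hd hcd q)
    (iSup_factorization_le_of_forall_exists_dvd hc hdc q)

theorem dvd_of_forall_dvd_succ {α : Type*} [Monoid α] {c : ℕ → α} (hc : ∀ n, c n ∣ c (n + 1)) {m n : ℕ} (h : m ≤ n) :
    c m ∣ c n :=
  Nat.rel_of_forall_rel_succ_of_le (· ∣ ·) hc h

theorem exists_strictMono_lt_of_tendsto (v : ℕ → ℕ → ℕ)
    (hv : ∀ n, Tendsto (v (n + 1)) atTop atTop) (B : ℕ → ℕ) :
    ∃ j : ℕ → ℕ, StrictMono j ∧ ∀ n, B (v n (j n)) < v (n + 1) (j (n + 1)) := by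
  have hnext : ∀ n x L, ∃ i, L < i ∧ x < v (n + 1) i := fun n x L =>
    ((eventually_gt_atTop L).and ((hv n).eventually_gt_atTop x)).exists
  choose next hnext_gt hnext_lt using hnext
  let j : ℕ → ℕ := fun n => Nat.rec 0 (fun n i => next n (B (v n i)) i) n
  exact ⟨j, strictMono_nat_of_lt_succ fun n => hnext_gt .., fun n => hnext_lt ..⟩

-- Since `k` increases, `F (k (n-1)) (k n) ≤ growthBound F (k n)`: a one-step bound suffices.
def growthBound (F : ℕ → ℕ → ℕ) (x : ℕ) : ℕ :=
  x ⊔ (Finset.Iic x).sup (F · x)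

theorem le_growthBound (F : ℕ → ℕ → ℕ) (x : ℕ) : x ≤ growthBound F x :=
  le_sup_left

theorem apply_le_growthBound (F : ℕ → ℕ → ℕ) {x y : ℕ} (h : y ≤ x) : F y x ≤ growthBound F x :=
  le_sup_of_le_right (Finset.le_sup (f := (F · x)) (Finset.mem_Iic.mpr h))

def interleave (a b : ℕ → ℕ) : ℕ → ℕ → ℕ
  | 0 => fun _ => 1
  | n + 1 => if Even n then a else b

section interleave

variable {a b : ℕ → ℕ}

theorem interleave_succ (n : ℕ) : interleave a b (n + 1) = if Even n then a else b :=
  rfl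

theorem interleave_two_mul_add_one (n : ℕ) : interleave a b (2 * n + 1) = a :=
  if_pos (even_two_mul n)

theorem interleave_two_mul_succ (n : ℕ) : interleave a b (2 * (n + 1)) = b :=
  if_neg (by simp [parity_simps])

theorem interleave_add_three (n : ℕ) : interleave a b (n + 3) = interleave a b (n + 1) := by
  simp [interleave, parity_simps]

theorem tendsto_interleave_succ (ha : Tendsto a atTop atTop) (hb : Tendsto b atTop atTop) (n : ℕ) :
    Tendsto (interleave a b (n + 1)) atTop atTop := by
  rw [interleave_succ]; split_ifs <;> assumption

theorem interleave_pos (ha : ∀ n, 0 < a n) (hb : ∀ n, 0 < b n) (n i : ℕ) :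
    0 < interleave a b n i := by
  rcases n with _ | n
  · exact one_pos
  · rw [interleave_succ]; split_ifs
    exacts [ha i, hb i]

theorem interleave_dvd_interleave_add_two (hadiv : ∀ n, a n ∣ a (n + 1))
    (hbdiv : ∀ n, b n ∣ b (n + 1)) (n : ℕ) {i i' : ℕ} (h : i ≤ i') :
    interleave a b n i ∣ interleave a b (n + 2) i' := by
  rcases n with _ | n
  · exact one_dvd _
  · rw [interleave_add_three, interleave_succ]; split_ifs
    exacts [dvd_of_forall_dvd_succ hadiv h, dvd_of_forall_dvd_succ hbdiv h]

end interleave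

/-- Interleaving lemma: given two divisibility-increasing sequences tending to
infinity and an arbitrary growth prescription `F`, there is a single strictly
increasing sequence `(k_n)` with `k 0 = 1`, `k n ∣ k (n+2)`,
`k (n+1) > F (k (n-1)) (k n)`, whose odd subsequence has the supernatural
number of `(a_n)` and whose even subsequence has the supernatural number of
`(b_n)`. -/
theorem stmt_16 (a b : ℕ → ℕ) (ha : ∀ n, 0 < a n) (hb : ∀ n, 0 < b n)
    (hadiv : ∀ n, a n ∣ a (n + 1)) (hbdiv : ∀ n, b n ∣ b (n + 1))
    (hatop : Filter.Tendsto a Filter.atTop Filter.atTop)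
    (hbtop : Filter.Tendsto b Filter.atTop Filter.atTop)
    (F : ℕ → ℕ → ℕ) :
    ∃ k : ℕ → ℕ, k 0 = 1 ∧ (∀ n, 0 < k n) ∧ StrictMono k
      ∧ (∀ n, k n ∣ k (n + 2))
      ∧ (∀ n, F (k (n - 1)) (k n) < k (n + 1))
      ∧ (∀ q : ℕ, q.Prime →
          (⨆ n, ((k (2 * n + 1)).factorization q : ℕ∞))
            = ⨆ n, ((a n).factorization q : ℕ∞))
      ∧ (∀ q : ℕ, q.Prime →
          (⨆ n, ((k (2 * n)).factorization q : ℕ∞))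
            = ⨆ n, ((b n).factorization q : ℕ∞)) := by
  obtain ⟨j, hj, hgrowth⟩ := exists_strictMono_lt_of_tendsto (interleave a b)
    (tendsto_interleave_succ hatop hbtop) (growthBound F)
  set k := fun n => interleave a b n (j n) with hk
  have hpos (n : ℕ) : 0 < k n := interleave_pos ha hb n (j n)
  have hmono : StrictMono k :=
    strictMono_nat_of_lt_succ fun n => (le_growthBound F _).trans_lt (hgrowth n)
  have hdvd (n : ℕ) : k n ∣ k (n + 2) :=
    interleave_dvd_interleave_add_two hadiv hbdiv n (hj.monotone (by omega))
  have hF (n : ℕ) : F (k (n - 1)) (k n) < k (n + 1) :=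
    (apply_le_growthBound F (hmono.monotone (by omega))).trans_lt (hgrowth n)
  have hodd (n : ℕ) : k (2 * n + 1) = a (j (2 * n + 1)) := by
    simp only [hk, interleave_two_mul_add_one]
  have heven (n : ℕ) : k (2 * (n + 1)) = b (j (2 * (n + 1))) := by
    simp only [hk, interleave_two_mul_succ]
  refine ⟨k, rfl, hpos, hmono, hdvd, hF, fun q _ => ?_, fun q _ => ?_⟩
  · refine Nat.iSup_factorization_eq_of_cofinal (fun n => (hpos _).ne') (fun n => (ha n).ne')
      (fun n => ⟨_, (hodd n).dvd⟩) (fun n => ⟨n, ?_⟩) q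
    rw [hodd]
    exact dvd_of_forall_dvd_succ hadiv (hj.le_apply.trans' (by omega))
  · refine Nat.iSup_factorization_eq_of_cofinal (fun n => (hpos _).ne') (fun n => (hb n).ne')
      (fun n => ?_) (fun n => ⟨n + 1, ?_⟩) q
    · rcases n with _ | n
      · exact ⟨0, one_dvd _⟩
      · exact ⟨_, (heven n).dvd⟩
    · rw [heven]
      exact dvd_of_forall_dvd_succ hbdiv (hj.le_apply.trans' (by omega))
end
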